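/- arXiv:1907.02800 — 2 statements merged into one kernel-verified Lean document; each statement's English description precedes it below -/
import Mathlib

section
/- The graph Γ = Cay(V,S₂) has an order 2 automorphism that interchanges only non-adjacent vertices: there exists a graph automorphism φ of Γ with φ ∘ φ = id and φ ≠ id such that for every v ∈ V with φ(v) ≠ v, the vertices v and φ(v) are not adjacent in Γ. -/
open SimpleGraph Polynomial Matrix

/-- `V` is the 5-dimensional vector space over `GF(3)`. -/
abbrev V : Type := Fin 5 → ZMod 3

/-- The specific parity-check matrix of the ternary Golay code. -/
def H : Matrix (Fin 5) (Fin 11) (ZMod 3) :=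
  !![1,1,1,2,2,0,1,0,0,0,0;
     1,1,2,1,0,2,0,1,0,0,0;
     1,2,1,0,1,2,0,0,1,0,0;
     1,2,0,1,2,1,0,0,0,1,0;
     1,0,2,2,1,1,0,0,0,0,1]

/-- `S₂ = {±x₁, …, ±x₁₁}` where `x₁, …, x₁₁` are the columns of `H`. -/
def S2 : Set V := {v | ∃ j : Fin 11, v = (fun i => H i j) ∨ v = -(fun i => H i j)}

instance : DecidablePred (· ∈ S2) := fun v =>
  decidable_of_iff (∃ j : Fin 11, v = (fun i => H i j) ∨ v = -(fun i => H i j)) Iff.rfl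

/-- The reversal map sending `(a,b,c,d,e)` to `(e,d,c,b,a)`. -/
def r (v : V) : V := fun i => v i.rev

/-- The Berlekamp–Van Lint–Seidel graph `Γ = Cay(V, S₂)`:
`u` is adjacent to `v` iff `u ≠ v` and `u - v ∈ S₂`. -/
def Γ : SimpleGraph V where
  Adj u v := u ≠ v ∧ u - v ∈ S2
  symm := ⟨by
    rintro u v ⟨hne, j, hj⟩
    refine ⟨hne.symm, j, ?_⟩
    rcases hj with h | h
    · right; rw [← neg_sub, h]
    · left; rw [← neg_sub, h, neg_neg]⟩
  loopless := ⟨fun v h => h.1 rfl⟩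

instance : DecidableRel Γ.Adj := fun u v =>
  decidable_of_iff (u ≠ v ∧ u - v ∈ S2) Iff.rfl

/-! The coordinate reversal `r` is an additive involution of `V`. Reversing the rows of `H` sends
each column to plus or minus a column, so `r` preserves `S₂` and is an automorphism of `Γ`.
If `v` were adjacent to `r v`, then `w = v - r v` would be an element of `S₂` with `r w = -w`,
but no column `x` of `H` satisfies `r x = -x`. -/

section DifferenceGraph

variable {A : Type*} [AddCommGroup A] {G : SimpleGraph A} {S : Set A}

def isoOfAddEquiv (hG : ∀ u v, G.Adj u v ↔ u ≠ v ∧ u - v ∈ S) (f : A ≃+ A)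
    (hf : ∀ w, f w ∈ S ↔ w ∈ S) : G ≃g G :=
  ⟨f.toEquiv, fun {u v} => by simp [hG, ← map_sub, hf]⟩

/-- `v - f v` is negated by the involution `f`, so it cannot lie in `S`. -/
theorem not_adj_apply_of_involutive (hG : ∀ u v, G.Adj u v ↔ u ≠ v ∧ u - v ∈ S) (f : A →+ A)
    (hf : Function.Involutive f) (hS : ∀ w ∈ S, f w ≠ -w) (v : A) : ¬ G.Adj v (f v) := by
  rw [hG]
  rintro ⟨-, hmem⟩
  refine hS _ hmem ?_
  rw [map_sub, hf v, neg_sub]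

end DifferenceGraph

theorem r_involutive : Function.Involutive r := fun v => funext fun i => by simp [r]

def rAddEquiv : V ≃+ V where
  toFun := r
  invFun := r
  left_inv := r_involutive
  right_inv := r_involutive
  map_add' _ _ := rfl

theorem r_column_eq_pm_column (j : Fin 11) :
    ∃ k, r (fun i => H i j) = (fun i => H i k) ∨ r (fun i => H i j) = -(fun i => H i k) := by
  revert j; decide

theorem r_column_ne_neg_column (j : Fin 11) : r (fun i => H i j) ≠ -(fun i => H i j) := by
  revert j; decide

theorem r_mem_S2 {w : V} (hw : w ∈ S2) : r w ∈ S2 := by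
  obtain ⟨j, rfl | rfl⟩ := hw <;> obtain ⟨k, hk | hk⟩ := r_column_eq_pm_column j
  · exact ⟨k, .inl hk⟩
  · exact ⟨k, .inr hk⟩
  · exact ⟨k, .inr (congrArg Neg.neg hk)⟩
  · exact ⟨k, .inl ((congrArg Neg.neg hk).trans (neg_neg _))⟩

theorem r_mem_S2_iff (w : V) : r w ∈ S2 ↔ w ∈ S2 :=
  ⟨fun h => r_involutive w ▸ r_mem_S2 h, r_mem_S2⟩

theorem r_ne_neg_of_mem_S2 {w : V} (hw : w ∈ S2) : r w ≠ -w := by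
  obtain ⟨j, rfl | rfl⟩ := hw
  · exact r_column_ne_neg_column j
  · exact fun h => r_column_ne_neg_column j (neg_injective h)

theorem r_ne_id : r ≠ id := fun h => by
  have : r ![1, 0, 0, 0, 0] = ![1, 0, 0, 0, 0] := congrFun h _
  revert this; decide

/-- `Γ` has an order 2 automorphism that interchanges only non-adjacent vertices. -/
theorem exists_order_two_automorphism_interchanging_only_nonadjacent :
    ∃ φ : Γ ≃g Γ, (⇑φ ∘ ⇑φ = id) ∧ (⇑φ ≠ id) ∧
      (∀ v : V, φ v ≠ v → ¬ Γ.Adj v (φ v)) := by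
  have hΓ : ∀ u v, Γ.Adj u v ↔ u ≠ v ∧ u - v ∈ S2 := fun _ _ => Iff.rfl
  refine ⟨isoOfAddEquiv hΓ rAddEquiv r_mem_S2_iff, r_involutive.comp_self, r_ne_id, ?_⟩
  exact fun v _ => not_adj_apply_of_involutive hΓ rAddEquiv.toAddMonoidHom r_involutive
    (fun _ => r_ne_neg_of_mem_S2) v
end

section
/- The graph Δ is a strictly Deza graph with parameters (243,22,2,1): Δ has 243 vertices, is 22-regular, any two distinct vertices of Δ have exactly 1 or exactly 2 common neighbours, Δ has diameter 2, and Δ is not strongly regular (there is no pair (λ,μ) making Δ strongly regular with parameters (243,22,λ,μ)). -/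
open SimpleGraph Polynomial Matrix

lemma r_r (v : V) : r (r v) = v := funext fun i => by simp [r, Fin.rev_rev]

lemma r_sub (a b : V) : r (a - b) = r a - r b := rfl

lemma S2_neg : ∀ v ∈ S2, -v ∈ S2 := by
  rintro v ⟨j, h | h⟩
  · exact ⟨j, Or.inr (by rw [h])⟩
  · exact ⟨j, Or.inl (by rw [h, neg_neg])⟩

lemma S2_r : ∀ v ∈ S2, r v ∈ S2 := by
  have base : ∀ j : Fin 11, r (fun i => H i j) ∈ S2 := by decide
  rintro v ⟨j, h | h⟩
  · rw [h]; exact base j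
  · rw [h]
    have hneg : r (-(fun i => H i j)) = -(r (fun i => H i j)) := rfl
    rw [hneg]; exact S2_neg _ (base j)

set_option maxRecDepth 40000 in
lemma sub_r_not_mem : ∀ v : V, v - r v ∉ S2 := by decide

/-- The graph `Δ` obtained from `Γ = Cay(V, S₂)` by dual Seidel switching with respect to
the reversal involution `r`: `u` is adjacent to `v` iff `r u ≠ v` and `r u - v ∈ S₂`. -/
def Δ : SimpleGraph V where
  Adj u v := r u ≠ v ∧ r u - v ∈ S2
  symm := ⟨by
    rintro u v ⟨h1, h2⟩
    refine ⟨fun h => h1 ?_, ?_⟩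
    · rw [← h, r_r]
    · have key : r v - u = -(r (r u - v)) := by
        rw [r_sub, r_r]; abel
      rw [key]
      exact S2_neg _ (S2_r _ h2)⟩
  loopless := ⟨fun v h => sub_r_not_mem (r v) (by rw [r_r]; exact h.2)⟩

instance : DecidableRel Δ.Adj := fun u v =>
  decidable_of_iff (r u ≠ v ∧ r u - v ∈ S2) Iff.rfl

/-!
Since `0 ∉ S₂`, adjacency in `Δ` is just `r u - v ∈ S₂`. Hence `w ↦ r u - w` identifies the
neighbours of `u` with `S₂`, and the common neighbours of `u` and `v` with the `s ∈ S₂` such that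
`s - (r u - r v) ∈ S₂`, i.e. with the common neighbours of `r u` and `r v` in `Γ = Cay(V, S₂)`.
`Γ` is the coset graph of the ternary Golay code, strongly regular with `(λ, μ) = (1, 2)`; this
finite fact is checked by evaluation. As `r` is injective, two distinct vertices of `Δ` have one
or two common neighbours, so `Δ` has diameter 2; but whether the images `r u`, `r v` of adjacent
vertices of `Δ` are adjacent in `Γ` depends on the edge, so `Δ` is not strongly regular.
-/

open Finset

namespace SimpleGraph

section AdjIffSubMem

variable {A : Type*} [AddCommGroup A] [Fintype A] {G : SimpleGraph A}
  [DecidableRel G.Adj] {S : Finset A} {σ : A → A}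

theorem degree_eq_card_of_adj_iff_sub_mem (hG : ∀ u v, G.Adj u v ↔ σ u - v ∈ S) (u : A) :
    G.degree u = #S := by
  refine card_nbij' (σ u - ·) (σ u - ·) (fun w hw ↦ ?_) (fun s hs ↦ ?_)
    (fun _ _ ↦ sub_sub_cancel _ _) (fun _ _ ↦ sub_sub_cancel _ _)
  · simpa [hG] using hw
  · simpa [hG] using hs

theorem card_commonNeighbors_eq_of_adj_iff_sub_mem [DecidableEq A]
    (hG : ∀ u v, G.Adj u v ↔ σ u - v ∈ S) (u v : A) :
    Fintype.card (G.commonNeighbors u v) = #{s ∈ S | s - (σ u - σ v) ∈ S} := by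
  rw [← Set.toFinset_card]
  refine card_nbij' (σ u - ·) (σ u - ·) (fun w hw ↦ ?_) (fun s hs ↦ ?_)
    (fun _ _ ↦ sub_sub_cancel _ _) (fun _ _ ↦ sub_sub_cancel _ _)
  · simpa [mem_commonNeighbors, hG, sub_sub_sub_cancel_left] using hw
  · have hv : σ v - (σ u - s) = s - (σ u - σ v) := by abel
    simpa [mem_commonNeighbors, hG, hv] using hs

end AdjIffSubMem

theorem diam_eq_two_of_commonNeighbors_nonempty {α : Type*} [Nontrivial α] {G : SimpleGraph α}
    (hG : G ≠ ⊤) (h : ∀ u v, u ≠ v → ¬G.Adj u v → (G.commonNeighbors u v).Nonempty) :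
    G.diam = 2 := by
  have hle : G.ediam ≤ 2 := by
    refine ediam_le_of_edist_le fun u v ↦ ?_
    obtain rfl | huv := eq_or_ne u v
    · simp
    by_cases hadj : G.Adj u v
    · simp [edist_eq_one_iff_adj.2 hadj]
    obtain ⟨w, huw, hvw⟩ := h u v huv hadj
    exact edist_le (.cons huw (.cons hvw.symm .nil))
  have hge : 1 < G.ediam :=
    (Order.one_le_iff_ne_zero.2 ediam_ne_zero).lt_of_ne fun h1 ↦ hG (ediam_eq_one.1 h1.symm)
  rw [diam, le_antisymm hle (Order.add_one_le_of_lt hge)]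
  rfl

theorem not_isSRGWith_of_card_commonNeighbors_ne {α : Type*} [Fintype α] {G : SimpleGraph α}
    [DecidableRel G.Adj] {u v u' v' : α} (h : G.Adj u v) (h' : G.Adj u' v')
    (hne : Fintype.card (G.commonNeighbors u v) ≠ Fintype.card (G.commonNeighbors u' v'))
    (n k ℓ μ : ℕ) : ¬G.IsSRGWith n k ℓ μ :=
  fun hsrg ↦ hne ((hsrg.of_adj u v h).trans (hsrg.of_adj u' v' h').symm)

end SimpleGraph

theorem Finset.card_filter_sub_mem_map {A B : Type*} [AddGroup A] [AddGroup B] [DecidableEq A]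
    [DecidableEq B] (f : A →+ B) (hf : Function.Injective f) (S : Finset A) (d : A) :
    #{s ∈ S.map ⟨f, hf⟩ | s - f d ∈ S.map ⟨f, hf⟩} = #{s ∈ S | s - d ∈ S} := by
  rw [filter_map, card_map]
  congr 1
  ext s
  simp [← map_sub, hf.eq_iff]

def S2Finset : Finset V := univ.biUnion fun j ↦ {Hᵀ j, -Hᵀ j}

lemma mem_S2Finset {v : V} : v ∈ S2Finset ↔ v ∈ S2 := by
  simp [S2Finset, S2, Matrix.transpose_apply, funext_iff]

lemma card_S2Finset : #S2Finset = 22 := by decide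

lemma zero_notMem_S2Finset : (0 : V) ∉ S2Finset := by decide

lemma delta_adj_iff (u v : V) : Δ.Adj u v ↔ r u - v ∈ S2Finset := by
  refine ⟨fun h ↦ mem_S2Finset.2 h.2, fun h ↦ ⟨fun huv ↦ ?_, mem_S2Finset.1 h⟩⟩
  rw [huv, sub_self] at h
  exact zero_notMem_S2Finset h

lemma delta_isRegularOfDegree : Δ.IsRegularOfDegree 22 := fun u ↦
  (degree_eq_card_of_adj_iff_sub_mem delta_adj_iff u).trans card_S2Finset

def toTuple : V →+ ZMod 3 × ZMod 3 × ZMod 3 × ZMod 3 × ZMod 3 where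
  toFun v := (v 0, v 1, v 2, v 3, v 4)
  map_zero' := rfl
  map_add' _ _ := rfl

lemma toTuple_injective : Function.Injective toTuple := by
  intro u v h
  simp only [toTuple, AddMonoidHom.coe_mk, ZeroHom.coe_mk, Prod.mk.injEq] at h
  funext i
  fin_cases i <;> simp [h]

lemma card_filter_sub_mem_S2Finset {d : V} (hd : d ≠ 0) :
    #{s ∈ S2Finset | s - d ∈ S2Finset} = if d ∈ S2Finset then 1 else 2 := by
  -- The kernel evaluates this about twice as fast on tuples as on functions `Fin 5 → ZMod 3`.
  set T := S2Finset.map ⟨toTuple, toTuple_injective⟩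
  have hT : ∀ t, t ≠ 0 → #{s ∈ T | s - t ∈ T} = if t ∈ T then 1 else 2 := by decide +kernel
  rw [← card_filter_sub_mem_map toTuple toTuple_injective,
    hT _ ((map_ne_zero_iff _ toTuple_injective).2 hd)]
  simp [T]

lemma delta_card_commonNeighbors {u v : V} (huv : u ≠ v) :
    Fintype.card (Δ.commonNeighbors u v) = if r u - r v ∈ S2Finset then 1 else 2 := by
  rw [card_commonNeighbors_eq_of_adj_iff_sub_mem delta_adj_iff,
    card_filter_sub_mem_S2Finset (sub_ne_zero.2 ((Function.LeftInverse.injective r_r).ne huv))]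

lemma delta_ne_top : Δ ≠ ⊤ := by
  have h : ¬Δ.Adj 0 ![1, 1, 0, 0, 0] := by rw [delta_adj_iff]; decide
  exact fun hΔ ↦ h (by rw [hΔ, top_adj]; decide)

lemma delta_not_isSRGWith (n k ℓ μ : ℕ) : ¬Δ.IsSRGWith n k ℓ μ := by
  refine not_isSRGWith_of_card_commonNeighbors_ne (u := 0) (v := ![1, 2, 0, 2, 1])
    (u' := ![0, 0, 0, 0, 1]) (v' := ![0, 0, 1, 2, 1]) ?_ ?_ ?_ n k ℓ μ
  · rw [delta_adj_iff]; decide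
  · rw [delta_adj_iff]; decide
  · rw [delta_card_commonNeighbors (by decide), delta_card_commonNeighbors (by decide)]
    decide

/-- `Δ` is a strictly Deza graph with parameters `(243, 22, 2, 1)`: it has 243 vertices,
is 22-regular, any two distinct vertices have exactly 1 or exactly 2 common neighbours,
it has diameter 2, and it is not strongly regular. -/
theorem delta_is_strictly_deza :
    Fintype.card V = 243 ∧
    Δ.IsRegularOfDegree 22 ∧
    (∀ u v : V, u ≠ v →
      Fintype.card (Δ.commonNeighbors u v) = 1 ∨ Fintype.card (Δ.commonNeighbors u v) = 2) ∧
    Δ.diam = 2 ∧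
    ¬ ∃ ℓ μ : ℕ, Δ.IsSRGWith 243 22 ℓ μ := by
  have hcommon (u v : V) (huv : u ≠ v) :
      Fintype.card (Δ.commonNeighbors u v) = 1 ∨ Fintype.card (Δ.commonNeighbors u v) = 2 := by
    rw [delta_card_commonNeighbors huv]
    split_ifs <;> simp
  refine ⟨rfl, delta_isRegularOfDegree, hcommon, ?_, fun ⟨ℓ, μ, h⟩ ↦ delta_not_isSRGWith _ _ _ _ h⟩
  refine diam_eq_two_of_commonNeighbors_nonempty delta_ne_top fun u v huv _ ↦ ?_
  rw [← Set.nonempty_coe_sort, ← Fintype.card_pos_iff]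
  have := hcommon u v huv
  omega
end
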